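/- arXiv:math/9510203 — 5 statements merged into one kernel-verified Lean document; each statement's English description precedes it below -/
import Mathlib

section
/- There exists a universal constant c > 0 such that for every ρ ∈ (0,1) and every positive integer n, the set Θ = { (x, y) ∈ ℝⁿ × ℝⁿ : |x| ≤ 1, |y| ≤ ρ, |x + y| ≤ (1 + ρ²)^{1/2} } satisfies λ(Θ) ≤ (1 − c·min{ρ√n, 1})·λ(Bⁿ)·λ(ρBⁿ), where |·| denotes the Euclidean norm. -/
/-!
Write `n` for the dimension and `N = √n`. If `‖x‖² ≥ 1 - ρ/(16N)`, put `θ = x/‖x‖`,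
`h = (ρ + ρ²)/(16N)` and `ρ'² = ρ² - ρ²/(16N)`. Every `y` with `ρ' < ‖y‖ ≤ ρ` and `⟪θ, y⟫ ≥ h`
satisfies `‖x + y‖² > 1 + ρ²`. The cap `{‖y‖ ≤ ρ, ⟪θ, y⟫ ≥ h}` has relative height
`h/ρ ≤ 1/(8N)`, so it fills at least a quarter of `ρBⁿ`: the slab `0 ≤ ⟪θ, y⟫ ≤ u` of `Bⁿ` has
volume at most `u·λ(Bⁿ⁻¹) ≤ 2uN·λ(Bⁿ)`. Removing the part inside `ρ'Bⁿ` keeps the fraction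
`1 - (ρ'/ρ)ⁿ ≥ 1/64` of it. The admissible `x` fill the shell `Bⁿ \ (1 - ρ/(16N))^{1/2}Bⁿ`, of
relative volume `1 - (1 - ρ/(16N))^{n/2} ≥ min(ρN, 1)/64`. By Fubini the complement of `Θ` in
`Bⁿ × ρBⁿ` has measure at least `min(ρN, 1)/16384 · λ(Bⁿ)λ(ρBⁿ)`.
-/

open MeasureTheory Metric Module Real Set
open scoped ENNReal RealInnerProductSpace Pointwise

lemma half_min_one_le_one_sub_exp_neg {x : ℝ} (hx : 0 ≤ x) : min x 1 / 2 ≤ 1 - exp (-x) := by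
  set y := min x 1
  have hy0 : 0 ≤ y := le_min hx zero_le_one
  have hy1 : y ≤ 1 := min_le_right x 1
  have hexp : exp (-y) * (1 + y) ≤ 1 := by
    rw [exp_neg, inv_mul_le_one₀ (exp_pos y)]
    linarith [add_one_le_exp y]
  have hmono : exp (-x) ≤ exp (-y) := exp_le_exp.2 (neg_le_neg (min_le_left x 1))
  nlinarith [exp_pos (-y)]

lemma half_min_one_le_one_sub_sqrt_one_sub_pow {δ : ℝ} (hδ0 : 0 ≤ δ) (hδ1 : δ ≤ 1) (n : ℕ) :
    min (δ * n / 2) 1 / 2 ≤ 1 - √(1 - δ) ^ n := by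
  have hsqrt : √(1 - δ) ≤ exp (-(δ / 2)) :=
    sqrt_le_iff.2 ⟨by linarith [one_sub_le_exp_neg (δ / 2)],
      by nlinarith [one_sub_le_exp_neg (δ / 2)]⟩
  calc min (δ * n / 2) 1 / 2 ≤ 1 - exp (-(δ * n / 2)) :=
        half_min_one_le_one_sub_exp_neg (by positivity)
    _ = 1 - exp (-(δ / 2)) ^ n := by rw [← exp_nat_mul]; ring_nf
    _ ≤ 1 - √(1 - δ) ^ n := by gcongr

lemma min_mul_sqrt_div_le_one_sub_sqrt_pow {t : ℝ} (ht0 : 0 ≤ t) (ht1 : t ≤ 1) {n : ℕ}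
    (hn : 0 < n) : min (t * √n) 1 / 64 ≤ 1 - √(1 - t / (16 * √n)) ^ n := by
  set N := √(n : ℝ)
  have hN : 1 ≤ N := one_le_sqrt.2 (by exact_mod_cast hn)
  have hδ1 : t / (16 * N) ≤ 1 := by
    rw [div_le_one (by positivity)]; linarith
  have hmin : min (t * N) 1 / 32 ≤ min (t / (16 * N) * n / 2) 1 := by
    rw [show (n : ℝ) = N ^ 2 from (sq_sqrt (Nat.cast_nonneg n)).symm,
      show t / (16 * N) * N ^ 2 / 2 = t * N / 32 by field_simp; ring]
    exact le_min (by linarith [min_le_left (t * N) 1]) (by linarith [min_le_right (t * N) 1])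
  linarith [half_min_one_le_one_sub_sqrt_one_sub_pow (by positivity) hδ1 n]

section Measure

variable {α β : Type*} [MeasurableSpace α] [MeasurableSpace β]

lemma measure_mul_le_prod_of_le_measure_prodMk {μ : Measure α} {ν : Measure β} [SFinite ν]
    {s : Set α} {t : Set (α × β)} (ht : MeasurableSet t) {c : ℝ≥0∞}
    (h : ∀ x ∈ s, c ≤ ν (Prod.mk x ⁻¹' t)) : μ s * c ≤ μ.prod ν t := by
  rw [Measure.prod_apply ht, mul_comm, ← setLIntegral_const]
  exact (setLIntegral_mono (measurable_measure_prodMk_left ht) h).trans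
    (setLIntegral_le_lintegral _ _)

lemma measure_diff_le_ofReal_one_sub_mul {μ : Measure α} {s t : Set α} (hts : t ⊆ s)
    (ht : NullMeasurableSet t μ) (hs : μ s ≠ ∞) {ε : ℝ} (h : ENNReal.ofReal ε * μ s ≤ μ t) :
    μ (s \ t) ≤ ENNReal.ofReal (1 - ε) * μ s := by
  rw [measure_sdiff hts ht (ne_top_of_le_ne_top hs (measure_mono hts)), tsub_le_iff_right]
  calc μ s = ENNReal.ofReal (1 - ε + ε) * μ s := by simp
    _ ≤ (ENNReal.ofReal (1 - ε) + ENNReal.ofReal ε) * μ s := by gcongr; exact ENNReal.ofReal_add_le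
    _ ≤ ENNReal.ofReal (1 - ε) * μ s + μ t := by rw [add_mul]; gcongr

end Measure

lemma addHaar_closedBall_diff_ball {E : Type*} [NormedAddCommGroup E] [NormedSpace ℝ E]
    [MeasurableSpace E] [BorelSpace E] [FiniteDimensional ℝ E] (μ : Measure E)
    [μ.IsAddHaarMeasure] (x : E) {a r : ℝ} (ha : 0 < a) (har : a ≤ r) :
    μ (closedBall x r \ ball x a) =
      ENNReal.ofReal (r ^ finrank ℝ E - a ^ finrank ℝ E) * μ (closedBall 0 1) := by
  rw [measure_sdiff (ball_subset_closedBall.trans (closedBall_subset_closedBall har))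
      measurableSet_ball.nullMeasurableSet measure_ball_lt_top.ne,
    Measure.addHaar_closedBall μ x (ha.le.trans har), Measure.addHaar_ball_of_pos μ x ha,
    ← ENNReal.sub_mul (fun _ _ => measure_ball_lt_top.ne), ← ENNReal.ofReal_sub _ (by positivity),
    Measure.addHaar_unitClosedBall_eq_addHaar_unitBall]

section BallCap

variable {E F : Type*} [NormedAddCommGroup E] [InnerProductSpace ℝ E]
  [NormedAddCommGroup F] [InnerProductSpace ℝ F]

def ballCap (θ : E) (r h : ℝ) : Set E := {y | ‖y‖ ≤ r ∧ h ≤ ⟪θ, y⟫}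

lemma ballCap_subset_closedBall (θ : E) (r h : ℝ) : ballCap θ r h ⊆ closedBall 0 r :=
  fun _ hy => mem_closedBall_zero_iff.2 hy.1

lemma ballCap_anti {θ : E} {r h h' : ℝ} (hh : h ≤ h') : ballCap θ r h' ⊆ ballCap θ r h :=
  fun _ hy => ⟨hy.1, hh.trans hy.2⟩

lemma isClosed_ballCap (θ : E) (r h : ℝ) : IsClosed (ballCap θ r h) :=
  (isClosed_le continuous_norm continuous_const).inter
    (isClosed_le continuous_const
      (continuous_const.inner continuous_id : Continuous fun y : E => ⟪θ, y⟫))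

lemma preimage_ballCap (f : E ≃ₗᵢ[ℝ] F) (θ : E) (r h : ℝ) :
    f ⁻¹' ballCap (f θ) r h = ballCap θ r h := by
  ext y
  simp [ballCap]

lemma smul_ballCap {r : ℝ} (hr : 0 < r) (θ : E) (h : ℝ) :
    r • ballCap θ 1 (h / r) = ballCap θ r h := by
  ext y
  rw [mem_smul_set_iff_inv_smul_mem₀ hr.ne']
  simp only [ballCap, mem_ofPred_eq, norm_smul, real_inner_smul_right, norm_inv,
    Real.norm_of_nonneg hr.le]
  rw [inv_mul_le_one₀ hr, div_le_iff₀ hr, mul_comm r⁻¹, inv_mul_cancel_right₀ hr.ne']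

lemma ballCap_diff_closedBall_subset {x : E} (hx : 1 / 2 ≤ ‖x‖) {ρ ρ' h : ℝ} (hρ' : 0 ≤ ρ')
    (hh : 0 ≤ h) (hgap : 1 + ρ ^ 2 ≤ ‖x‖ ^ 2 + h + ρ' ^ 2) :
    ballCap (‖x‖⁻¹ • x) ρ h \ closedBall 0 ρ' ⊆ {y | ‖y‖ ≤ ρ ∧ √(1 + ρ ^ 2) < ‖x + y‖} := by
  rintro y ⟨⟨hyρ, hyh⟩, hyρ'⟩
  rw [mem_closedBall_zero_iff, not_le] at hyρ'
  rw [real_inner_smul_left] at hyh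
  have hinner : h ≤ 2 * ⟪x, y⟫ := by
    have hx0 : 0 < ‖x‖ := by linarith
    have hxy : 0 ≤ ⟪x, y⟫ := (mul_nonneg_iff_of_pos_left (inv_pos.2 hx0)).1 (hh.trans hyh)
    have : ‖x‖⁻¹ * ⟪x, y⟫ ≤ 2 * ⟪x, y⟫ := by
      rw [inv_mul_le_iff₀ hx0]; nlinarith
    linarith
  refine ⟨hyρ, ?_⟩
  rw [← sqrt_sq (norm_nonneg (x + y))]
  apply sqrt_lt_sqrt (by positivity)
  rw [norm_add_sq_real]
  nlinarith

lemma exists_linearIsometryEquiv_apply_eq [FiniteDimensional ℝ E] [FiniteDimensional ℝ F]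
    (hEF : finrank ℝ E = finrank ℝ F) {x : E} {y : F} (hxy : ‖x‖ = ‖y‖) :
    ∃ f : E ≃ₗᵢ[ℝ] F, f x = y := by
  let g := (stdOrthonormalBasis ℝ E).equiv (stdOrthonormalBasis ℝ F) (finCongr hEF)
  exact ⟨g.trans (Submodule.reflection (ℝ ∙ (g x - y))ᗮ),
    Submodule.reflection_sub (by rw [g.norm_map, hxy])⟩

variable [FiniteDimensional ℝ E] [MeasurableSpace E] [BorelSpace E]
  [FiniteDimensional ℝ F] [MeasurableSpace F] [BorelSpace F]

lemma volume_ballCap_map (f : E ≃ₗᵢ[ℝ] F) (θ : E) (r h : ℝ) :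
    volume (ballCap (f θ) r h) = volume (ballCap θ r h) := by
  rw [← preimage_ballCap f, f.measurePreserving.measure_preimage
    (isClosed_ballCap _ r h).measurableSet.nullMeasurableSet]

lemma volume_ballCap_lt_top (θ : E) (r h : ℝ) : volume (ballCap θ r h) < ∞ :=
  (measure_mono (ballCap_subset_closedBall θ r h)).trans_lt measure_closedBall_lt_top

lemma volume_ballCap_eq_ofReal_pow_mul {r : ℝ} (hr : 0 < r) (θ : E) (h : ℝ) :
    volume (ballCap θ r h) = ENNReal.ofReal (r ^ finrank ℝ E) * volume (ballCap θ 1 (h / r)) := by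
  rw [← smul_ballCap hr, Measure.addHaar_smul_of_nonneg _ hr.le]

lemma volume_closedBall_le_two_mul_volume_ballCap (θ : E) :
    volume (closedBall (0 : E) 1) ≤ 2 * volume (ballCap θ 1 0) := by
  have hcover : closedBall (0 : E) 1 ⊆ ballCap θ 1 0 ∪ ballCap (-θ) 1 0 := by
    intro y hy
    rw [mem_closedBall_zero_iff] at hy
    rcases le_total 0 ⟪θ, y⟫ with h | h
    · exact Or.inl ⟨hy, h⟩
    · exact Or.inr ⟨hy, by rwa [inner_neg_left, neg_nonneg]⟩
  calc volume (closedBall (0 : E) 1) ≤ volume (ballCap θ 1 0) + volume (ballCap (-θ) 1 0) :=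
        (measure_mono hcover).trans (measure_union_le _ _)
    _ = 2 * volume (ballCap θ 1 0) := by
        rw [two_mul, ← volume_ballCap_map (LinearIsometryEquiv.neg ℝ) θ]
        rfl

lemma le_volume_ballCap_diff_closedBall {r r' h : ℝ} (hr' : 0 < r') (hr'r : r' ≤ r) (hh : 0 ≤ h)
    (θ : E) : ENNReal.ofReal (r ^ finrank ℝ E - r' ^ finrank ℝ E) * volume (ballCap θ 1 (h / r)) ≤
      volume (ballCap θ r h \ closedBall 0 r') := by
  have hsmall : volume (ballCap θ r' h) ≤
      ENNReal.ofReal (r' ^ finrank ℝ E) * volume (ballCap θ 1 (h / r)) := by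
    rw [volume_ballCap_eq_ofReal_pow_mul hr']
    exact mul_le_mul_right (measure_mono (ballCap_anti (div_le_div_of_nonneg_left hh hr' hr'r))) _
  have hcover : ballCap θ r h ⊆ (ballCap θ r h \ closedBall 0 r') ∪ ballCap θ r' h := by
    intro y hy
    by_cases hy' : y ∈ closedBall 0 r'
    · exact Or.inr ⟨mem_closedBall_zero_iff.1 hy', hy.2⟩
    · exact Or.inl ⟨hy, hy'⟩
  have hbig := (measure_mono (μ := volume) hcover).trans (measure_union_le _ _)
  rw [volume_ballCap_eq_ofReal_pow_mul (hr'.trans_le hr'r)] at hbig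
  rw [ENNReal.ofReal_sub _ (by positivity),
    ENNReal.sub_mul fun _ _ => (volume_ballCap_lt_top θ 1 _).ne, tsub_le_iff_right]
  exact hbig.trans (add_le_add_right hsmall _)

end BallCap

section ProdL2

variable {V : Type*} [NormedAddCommGroup V] [InnerProductSpace ℝ V] [FiniteDimensional ℝ V]

lemma finrank_withLp_prod : finrank ℝ (WithLp 2 (ℝ × V)) = finrank ℝ V + 1 := by
  rw [(WithLp.linearEquiv 2 ℝ (ℝ × V)).finrank_eq, finrank_prod, finrank_self, add_comm]

variable [MeasurableSpace V] [BorelSpace V]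

lemma volume_withLp_prod (s : Set ℝ) (t : Set V) :
    volume {w : WithLp 2 (ℝ × V) | w.fst ∈ s ∧ w.snd ∈ t} = volume s * volume t := by
  rw [← Measure.prod_prod, ← Measure.volume_eq_prod,
    ← (WithLp.volume_preserving_symm_measurableEquiv_toLp_prod ℝ V).measure_preimage_equiv]
  rfl

lemma volume_closedBall_inter_fst_mem_Icc_le (u : ℝ) :
    volume {w : WithLp 2 (ℝ × V) | ‖w‖ ≤ 1 ∧ w.fst ∈ Icc 0 u} ≤
      ENNReal.ofReal u * volume (closedBall (0 : V) 1) := by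
  calc _ ≤ volume {w : WithLp 2 (ℝ × V) | w.fst ∈ Icc 0 u ∧ w.snd ∈ closedBall 0 1} :=
        measure_mono fun w hw =>
          ⟨hw.2, mem_closedBall_zero_iff.2 ((WithLp.norm_snd_le (x := w)).trans hw.1)⟩
    _ = _ := by rw [volume_withLp_prod, Real.volume_Icc, sub_zero]

/-- The box `[-a, a] × b Bᵈ` with `a = 1 / (2√(d+1))`, `a² + b² = 1` lies in the unit ball,
and `bᵈ ≥ 1/2` by Bernoulli's inequality. -/
lemma ofReal_mul_volume_closedBall_le_volume_closedBall_withLp_prod :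
    ENNReal.ofReal (2 * √(finrank ℝ V + 1))⁻¹ * volume (closedBall (0 : V) 1) ≤
      volume (closedBall (0 : WithLp 2 (ℝ × V)) 1) := by
  set d := finrank ℝ V
  set a := (2 * √(d + 1 : ℝ))⁻¹
  set b := √(1 - a ^ 2)
  have ha0 : 0 < a := by positivity
  have ha2 : a ^ 2 = (4 * (d + 1 : ℝ))⁻¹ := by
    rw [inv_pow, mul_pow, sq_sqrt (by positivity)]; norm_num
  have ha2le : a ^ 2 ≤ 1 := by
    rw [ha2]; exact inv_le_one_of_one_le₀ (by linarith [(Nat.cast_nonneg d : (0 : ℝ) ≤ d)])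
  have hb2 : b ^ 2 = 1 - a ^ 2 := sq_sqrt (by linarith)
  have hbd : 1 / 2 ≤ b ^ d := by
    have hbern := one_add_mul_le_pow (a := -a ^ 2) (by linarith) d
    have hda : (d : ℝ) * a ^ 2 ≤ 1 / 4 := by
      rw [ha2, ← div_eq_mul_inv, div_le_iff₀ (by positivity)]; linarith
    have hsq : 3 / 4 ≤ (b ^ d) ^ 2 := by
      rw [← pow_mul, mul_comm, pow_mul, hb2, sub_eq_add_neg]; linarith
    nlinarith [pow_nonneg (sqrt_nonneg (1 - a ^ 2)) d]
  have hbox : {w : WithLp 2 (ℝ × V) | w.fst ∈ Icc (-a) a ∧ w.snd ∈ closedBall 0 b} ⊆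
      closedBall 0 1 := by
    rintro w ⟨⟨h1, h2⟩, h3⟩
    rw [mem_closedBall_zero_iff] at h3 ⊢
    have hsq : ‖w‖ ^ 2 ≤ 1 := by
      rw [WithLp.prod_norm_sq_eq_of_L2, Real.norm_eq_abs, sq_abs]
      nlinarith [norm_nonneg w.snd, sqrt_nonneg (1 - a ^ 2)]
    nlinarith [norm_nonneg w]
  calc ENNReal.ofReal a * volume (closedBall (0 : V) 1)
      ≤ ENNReal.ofReal (2 * a) * ENNReal.ofReal (b ^ d) * volume (closedBall (0 : V) 1) := by
        rw [← ENNReal.ofReal_mul (by positivity)]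
        gcongr
        nlinarith
    _ = volume {w : WithLp 2 (ℝ × V) | w.fst ∈ Icc (-a) a ∧ w.snd ∈ closedBall 0 b} := by
        rw [volume_withLp_prod, Real.volume_Icc, Measure.addHaar_closedBall' _ _ (sqrt_nonneg _),
          sub_neg_eq_add, ← two_mul, mul_assoc]
    _ ≤ _ := measure_mono hbox

lemma volume_closedBall_withLp_prod_le_four_mul_volume_ballCap {u : ℝ}
    (hu : 8 * u * √(finrank ℝ V + 1) ≤ 1) :
    volume (closedBall (0 : WithLp 2 (ℝ × V)) 1) ≤
      4 * volume (ballCap (WithLp.toLp 2 ((1 : ℝ), (0 : V))) 1 u) := by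
  set C := volume (closedBall (0 : WithLp 2 (ℝ × V)) 1)
  set e := WithLp.toLp 2 ((1 : ℝ), (0 : V))
  set slab := {w : WithLp 2 (ℝ × V) | ‖w‖ ≤ 1 ∧ w.fst ∈ Icc 0 u}
  have he : ∀ w : WithLp 2 (ℝ × V), ⟪e, w⟫ = w.fst := fun w => by
    simp [e, WithLp.prod_inner_apply]
  have hsplit : ballCap e 1 0 ⊆ ballCap e 1 u ∪ slab := by
    intro w ⟨hw, h0⟩
    rw [he] at h0
    rcases le_total u w.fst with h | h
    · exact Or.inl ⟨hw, by rwa [he]⟩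
    · exact Or.inr ⟨hw, h0, h⟩
  have hslab : 4 * volume slab ≤ C := by
    set N := √(finrank ℝ V + 1 : ℝ)
    have hN : 0 < N := by positivity
    calc 4 * volume slab ≤ 4 * (ENNReal.ofReal u * volume (closedBall (0 : V) 1)) :=
          mul_le_mul_right (volume_closedBall_inter_fst_mem_Icc_le u) 4
      _ = ENNReal.ofReal (8 * u * N) *
            (ENNReal.ofReal (2 * N)⁻¹ * volume (closedBall (0 : V) 1)) := by
          rw [← mul_assoc, ← mul_assoc, ← ENNReal.ofReal_mul' (by positivity),
            show 8 * u * N * (2 * N)⁻¹ = 4 * u by field_simp; ring,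
            ENNReal.ofReal_mul (by norm_num), ENNReal.ofReal_ofNat]
      _ ≤ 1 * C := by
          gcongr
          · exact ENNReal.ofReal_le_one.2 hu
          · exact ofReal_mul_volume_closedBall_le_volume_closedBall_withLp_prod
      _ = C := one_mul C
  have hC : C + C ≤ 4 * volume (ballCap e 1 u) + C :=
    calc C + C = 2 * C := (two_mul C).symm
      _ ≤ 2 * (2 * volume (ballCap e 1 0)) := by
          gcongr; exact volume_closedBall_le_two_mul_volume_ballCap e
      _ ≤ 2 * (2 * (volume (ballCap e 1 u) + volume slab)) := by
          gcongr; exact (measure_mono hsplit).trans (measure_union_le _ _)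
      _ = 4 * volume (ballCap e 1 u) + 4 * volume slab := by ring
      _ ≤ 4 * volume (ballCap e 1 u) + C := by gcongr
  exact (ENNReal.add_le_add_iff_right measure_closedBall_lt_top.ne).1 hC

end ProdL2

section Slice

variable {E : Type*} [NormedAddCommGroup E] [InnerProductSpace ℝ E] [FiniteDimensional ℝ E]
  [MeasurableSpace E] [BorelSpace E]

lemma volume_closedBall_le_four_mul_volume_ballCap {θ : E} (hθ : ‖θ‖ = 1) {u : ℝ}
    (hu : 8 * u * √(finrank ℝ E) ≤ 1) :
    volume (closedBall (0 : E) 1) ≤ 4 * volume (ballCap θ 1 u) := by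
  have : Nontrivial E := nontrivial_of_ne θ 0 (by rintro rfl; simp at hθ)
  obtain ⟨d, hd⟩ := Nat.exists_eq_add_one.2 (finrank_pos (R := ℝ) (M := E))
  have hW : finrank ℝ E = finrank ℝ (WithLp 2 (ℝ × EuclideanSpace ℝ (Fin d))) := by
    rw [finrank_withLp_prod, finrank_euclideanSpace_fin, hd]
  obtain ⟨f, hf⟩ := exists_linearIsometryEquiv_apply_eq hW (x := θ)
    (y := WithLp.toLp 2 ((1 : ℝ), (0 : EuclideanSpace ℝ (Fin d)))) (by simp [hθ])
  rw [← volume_ballCap_map f, hf, show closedBall (0 : E) 1 = f ⁻¹' closedBall 0 1 by simp,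
    f.measurePreserving.measure_preimage measurableSet_closedBall.nullMeasurableSet]
  apply volume_closedBall_withLp_prod_le_four_mul_volume_ballCap
  rwa [finrank_euclideanSpace_fin, ← Nat.cast_add_one, ← hd]

lemma le_volume_setOf_norm_add_gt {ρ : ℝ} (hρ0 : 0 < ρ) (hρ1 : ρ ≤ 1) (hE : 0 < finrank ℝ E)
    {x : E} (hx : 1 - ρ / (16 * √(finrank ℝ E)) ≤ ‖x‖ ^ 2) :
    ENNReal.ofReal (ρ ^ finrank ℝ E / 256) * volume (closedBall (0 : E) 1) ≤
      volume {y : E | ‖y‖ ≤ ρ ∧ √(1 + ρ ^ 2) < ‖x + y‖} := by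
  set n := finrank ℝ E
  set N := √(n : ℝ)
  have hN : 1 ≤ N := one_le_sqrt.2 (by exact_mod_cast hE)
  have hδ : 1 / (16 * N) ≤ 1 / 16 := by gcongr; linarith
  set w := ρ ^ 2 / (16 * N)
  set h := ρ / (16 * N) + w
  set ρ' := ρ * √(1 - 1 / (16 * N))
  have hρ'0 : 0 < ρ' := mul_pos hρ0 (sqrt_pos.2 (by linarith))
  have hρ'ρ : ρ' ≤ ρ := mul_le_of_le_one_right hρ0.le
    (sqrt_le_one.2 (by linarith [(by positivity : 0 ≤ 1 / (16 * N))]))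
  have hρ'sq : ρ' ^ 2 = ρ ^ 2 - w := by
    rw [mul_pow, sq_sqrt (by linarith)]; ring
  have hx2 : 1 / 2 ≤ ‖x‖ := by
    have : ρ / (16 * N) ≤ 1 / 16 := by
      rw [div_le_div_iff₀ (by positivity) (by norm_num)]; nlinarith
    nlinarith [norm_nonneg x]
  have hθ : ‖‖x‖⁻¹ • x‖ = 1 := norm_smul_inv_norm (norm_pos_iff.1 (by linarith))
  have hcap := volume_closedBall_le_four_mul_volume_ballCap hθ (u := h / ρ) (by
    rw [show 8 * (h / ρ) * N = (1 + ρ) / 2 by simp only [h, w]; field_simp; ring]; linarith)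
  have hgap : ρ ^ n / 64 ≤ ρ ^ n - ρ' ^ n := by
    have hfrac := min_mul_sqrt_div_le_one_sub_sqrt_pow zero_le_one le_rfl hE
    rw [one_mul, min_eq_right hN] at hfrac
    rw [mul_pow]
    nlinarith [pow_pos hρ0 n]
  calc ENNReal.ofReal (ρ ^ n / 256) * volume (closedBall (0 : E) 1)
      ≤ ENNReal.ofReal (ρ ^ n / 256) * (4 * volume (ballCap (‖x‖⁻¹ • x) 1 (h / ρ))) := by
        gcongr
    _ = ENNReal.ofReal (ρ ^ n / 64) * volume (ballCap (‖x‖⁻¹ • x) 1 (h / ρ)) := by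
        rw [← mul_assoc, ← ENNReal.ofReal_ofNat 4, ← ENNReal.ofReal_mul (by positivity)]
        ring_nf
    _ ≤ ENNReal.ofReal (ρ ^ n - ρ' ^ n) * volume (ballCap (‖x‖⁻¹ • x) 1 (h / ρ)) := by
        gcongr
    _ ≤ volume (ballCap (‖x‖⁻¹ • x) ρ h \ closedBall 0 ρ') :=
        le_volume_ballCap_diff_closedBall hρ'0 hρ'ρ (by positivity) _
    _ ≤ _ := measure_mono (ballCap_diff_closedBall_subset hx2 hρ'0.le (by positivity) (by
        rw [hρ'sq]; linarith))

lemma ofReal_mul_volume_closedBall_le_volume_closedBall_diff_ball {ρ : ℝ} (hρ0 : 0 ≤ ρ)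
    (hρ1 : ρ ≤ 1) (hE : 0 < finrank ℝ E) :
    ENNReal.ofReal (min (ρ * √(finrank ℝ E)) 1 / 64) * volume (closedBall (0 : E) 1) ≤
      volume (closedBall (0 : E) 1 \ ball 0 √(1 - ρ / (16 * √(finrank ℝ E)))) := by
  have hδ : ρ / (16 * √(finrank ℝ E)) < 1 := by
    rw [div_lt_one (by positivity)]
    linarith [one_le_sqrt.2 (by exact_mod_cast hE : (1 : ℝ) ≤ finrank ℝ E)]
  rw [addHaar_closedBall_diff_ball volume 0 (sqrt_pos.2 (by linarith))
    (sqrt_le_one.2 (by linarith [div_nonneg hρ0 (by positivity : (0 : ℝ) ≤ 16 * √(finrank ℝ E))])),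
    one_pow]
  gcongr
  exact min_mul_sqrt_div_le_one_sub_sqrt_pow hρ0 hρ1 hE

variable (E) in
/-- The complement of `Θ` in `Bⁿ × ρBⁿ`. -/
def escapingPairs (ρ : ℝ) : Set (E × E) :=
  {p | ‖p.1‖ ≤ 1 ∧ ‖p.2‖ ≤ ρ ∧ √(1 + ρ ^ 2) < ‖p.1 + p.2‖}

variable (E) in
lemma measurableSet_escapingPairs (ρ : ℝ) : MeasurableSet (escapingPairs E ρ) := by
  show MeasurableSet ({p : E × E | ‖p.1‖ ≤ 1} ∩
    ({p | ‖p.2‖ ≤ ρ} ∩ {p | √(1 + ρ ^ 2) < ‖p.1 + p.2‖}))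
  exact (measurableSet_le (by fun_prop) (by fun_prop)).inter
    ((measurableSet_le (by fun_prop) (by fun_prop)).inter
      (measurableSet_lt (by fun_prop) (by fun_prop)))

lemma le_volume_escapingPairs {ρ : ℝ} (hρ0 : 0 < ρ) (hρ1 : ρ ≤ 1) (hE : 0 < finrank ℝ E) :
    ENNReal.ofReal (min (ρ * √(finrank ℝ E)) 1 / 16384) *
        (volume (closedBall (0 : E) 1) * volume (closedBall (0 : E) ρ)) ≤
      volume (escapingPairs E ρ) := by
  set n := finrank ℝ E
  set C := volume (closedBall (0 : E) 1)
  set shell := closedBall (0 : E) 1 \ ball 0 √(1 - ρ / (16 * √(n : ℝ)))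
  have hslice : ∀ x ∈ shell,
      ENNReal.ofReal (ρ ^ n / 256) * C ≤ volume (Prod.mk x ⁻¹' escapingPairs E ρ) := by
    rintro x ⟨hx1, hxa⟩
    rw [mem_closedBall_zero_iff] at hx1
    rw [mem_ball_zero_iff, not_lt] at hxa
    convert le_volume_setOf_norm_add_gt hρ0 hρ1 hE (sqrt_le_iff.1 hxa).2 using 2
    ext y
    simp [escapingPairs, hx1]
  calc ENNReal.ofReal (min (ρ * √(n : ℝ)) 1 / 16384) * (C * volume (closedBall (0 : E) ρ))
      = ENNReal.ofReal (min (ρ * √(n : ℝ)) 1 / 64) * C * (ENNReal.ofReal (ρ ^ n / 256) * C) := by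
        rw [Measure.addHaar_closedBall' _ _ hρ0.le,
          show min (ρ * √(n : ℝ)) 1 / 16384 = min (ρ * √(n : ℝ)) 1 / 64 * (1 / 256) by ring,
          show ρ ^ n / 256 = ρ ^ n * (1 / 256) by ring, ENNReal.ofReal_mul (by positivity),
          ENNReal.ofReal_mul (by positivity)]
        ring
    _ ≤ volume shell * (ENNReal.ofReal (ρ ^ n / 256) * C) := by
        gcongr
        exact ofReal_mul_volume_closedBall_le_volume_closedBall_diff_ball hρ0.le hρ1 hE
    _ ≤ _ := by
        rw [Measure.volume_eq_prod]
        exact measure_mul_le_prod_of_le_measure_prodMk (measurableSet_escapingPairs _ ρ) hslice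

end Slice

/-- Lemma 1.3: the set of pairs `(x, y)` with `|x| ≤ 1`, `|y| ≤ ρ`,
`|x + y| ≤ (1 + ρ²)^{1/2}` occupies a proportion at most
`1 - c·min{ρ√n, 1}` of `Bⁿ × ρBⁿ`. -/
theorem volume_theta_upper_bound :
    ∃ c : ℝ, 0 < c ∧
      ∀ (ρ : ℝ), ρ ∈ Set.Ioo (0 : ℝ) 1 →
      ∀ (n : ℕ), 0 < n →
        volume {p : EuclideanSpace ℝ (Fin n) × EuclideanSpace ℝ (Fin n) |
            ‖p.1‖ ≤ 1 ∧ ‖p.2‖ ≤ ρ ∧ ‖p.1 + p.2‖ ≤ Real.sqrt (1 + ρ ^ 2)}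
          ≤ ENNReal.ofReal (1 - c * min (ρ * Real.sqrt n) 1) *
            (volume (Metric.closedBall (0 : EuclideanSpace ℝ (Fin n)) 1) *
              volume (Metric.closedBall (0 : EuclideanSpace ℝ (Fin n)) ρ)) := by
  refine ⟨1 / 16384, by norm_num, fun ρ ⟨hρ0, hρ1⟩ n hn => ?_⟩
  set B := closedBall (0 : EuclideanSpace ℝ (Fin n)) 1 ×ˢ
    closedBall (0 : EuclideanSpace ℝ (Fin n)) ρ
  have hB : volume B = volume (closedBall (0 : EuclideanSpace ℝ (Fin n)) 1) *
      volume (closedBall (0 : EuclideanSpace ℝ (Fin n)) ρ) := by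
    rw [Measure.volume_eq_prod, Measure.prod_prod]
  have hescaping : ENNReal.ofReal (1 / 16384 * min (ρ * √n) 1) * volume B ≤
      volume (escapingPairs (EuclideanSpace ℝ (Fin n)) ρ) := by
    have h := le_volume_escapingPairs (E := EuclideanSpace ℝ (Fin n)) hρ0 hρ1.le (by simpa)
    rwa [finrank_euclideanSpace_fin, ← hB, ← one_div_mul_eq_div] at h
  have hsub : escapingPairs _ ρ ⊆ B :=
    fun p hp => ⟨mem_closedBall_zero_iff.2 hp.1, mem_closedBall_zero_iff.2 hp.2.1⟩
  rw [← hB]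
  calc _ ≤ volume (B \ escapingPairs _ ρ) :=
        measure_mono fun p hp =>
          ⟨⟨mem_closedBall_zero_iff.2 hp.1, mem_closedBall_zero_iff.2 hp.2.1⟩,
            fun hG => hG.2.2.not_ge hp.2.2⟩
    _ ≤ _ := measure_diff_le_ofReal_one_sub_mul hsub
        (measurableSet_escapingPairs _ ρ).nullMeasurableSet
        ((isCompact_closedBall _ _).prod (isCompact_closedBall _ _)).measure_lt_top.ne hescaping
end

section
/- There exists a universal constant c₁ > 0 with the following property. Let ρ ∈ (0,1), let n ≥ 2 be an integer, and set τ = (1/2)·min{ρ√n, 1}. Then for every x₀ ∈ ℝⁿ with 1 − τ/n ≤ |x₀| ≤ 1, one has λ({ y ∈ ℝⁿ : |y| ≤ ρ and |x₀ + y| > (1 + ρ²)^{1/2} }) ≥ c₁·λ(ρBⁿ), where |·| denotes the Euclidean norm. -/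
/-!
Write `x₀ = ‖x₀‖ u` with `u` a unit vector. If the dimension `n` is bounded, the ball of radius
`ρ/16` centred at `(15ρ/16) u` already lies in the set, which gives the ratio `16⁻ⁿ`. For large
`n` the volume of `ρBⁿ` concentrates near its boundary sphere and in the slab `⟪u, y⟫ ≍ ρ/√n`:
with `w = ρ/√n`, every `y` with `⟪u, y⟫ ∈ [2w, 3w]` and distance to the axis `ℝ u` in
`[ρ(1 - 6/n), ρ(1 - 5/n)]` lies in the set. This cylindrical shell has volume
`w · κₙ₋₁ ρⁿ⁻¹ ((1 - 5/n)ⁿ⁻¹ - (1 - 6/n)ⁿ⁻¹) ≳ κₙ₋₁ ρⁿ / √n`, and log-convexity of `Γ` gives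
`κₙ ≤ √(2π/n) κₙ₋₁` for the volumes `κₖ` of the unit balls.
-/

open MeasureTheory Metric Real Set Module
open scoped RealInnerProductSpace

theorem Real.sqrt_mul_Gamma_add_half_le {s : ℝ} (hs : 0 < s) :
    √s * Gamma (s + 1 / 2) ≤ Gamma (s + 1) := by
  have hconv : Gamma (s + 1 / 2) ≤ Gamma s ^ (1 / 2 : ℝ) * Gamma (s + 1) ^ (1 / 2 : ℝ) := by
    convert Gamma_mul_add_mul_le_rpow_Gamma_mul_rpow_Gamma hs (by linarith : 0 < s + 1)
      one_half_pos one_half_pos (by norm_num) using 2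
    ring
  rw [← sqrt_eq_rpow, ← sqrt_eq_rpow, ← sqrt_mul (Gamma_pos_of_pos hs).le,
    Gamma_add_one hs.ne'] at hconv
  calc √s * Gamma (s + 1 / 2) ≤ √s * √(Gamma s * (s * Gamma s)) :=
        mul_le_mul_of_nonneg_left hconv (sqrt_nonneg s)
    _ = s * Gamma s := by
        rw [← sqrt_mul hs.le, show s * (Gamma s * (s * Gamma s)) = (s * Gamma s) ^ 2 by ring,
          sqrt_sq (mul_pos hs (Gamma_pos_of_pos hs)).le]
    _ = Gamma (s + 1) := (Gamma_add_one hs.ne').symm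

theorem Real.exp_neg_two_mul_le_one_sub {x : ℝ} (hx0 : 0 ≤ x) (hx : x ≤ 1 / 2) :
    exp (-(2 * x)) ≤ 1 - x := by
  have hpos : 0 < 1 - x := by linarith
  have key : (1 - x)⁻¹ ≤ exp (2 * x) :=
    calc (1 - x)⁻¹ = x / (1 - x) + 1 := by field_simp; ring
      _ ≤ exp (x / (1 - x)) := add_one_le_exp _
      _ ≤ exp (2 * x) := exp_le_exp.2 <| by rw [div_le_iff₀ hpos]; nlinarith
  rw [exp_neg]
  exact inv_le_of_inv_le₀ hpos key

theorem exp_neg_twelve_div_two_le_one_sub_pow_sub_one_sub_pow {m : ℕ} (hm : 12 ≤ m) :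
    exp (-12) / 2 ≤ (1 - 5 / (m + 1 : ℝ)) ^ m - (1 - 6 / (m + 1 : ℝ)) ^ m := by
  set N : ℝ := m + 1 with hN
  have hm' : (12 : ℝ) ≤ m := by exact_mod_cast hm
  have hN0 : 0 < N := by positivity
  have hx0 : 0 ≤ 6 / N := by positivity
  have hx : 6 / N ≤ 1 / 2 := by rw [div_le_iff₀ hN0]; linarith
  have hbern := pow_add_mul_le_add_pow (a := 1 - 6 / N) (b := 1 / N) (by linarith)
    (by linarith [show 0 ≤ 1 / N by positivity]) m
  rw [show 1 - 6 / N + 1 / N = 1 - 5 / N by ring] at hbern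
  have hexp : exp (-12) ≤ (1 - 6 / N) ^ (m - 1) :=
    calc exp (-12) ≤ exp (-(2 * (6 / N))) ^ m := by
          have : m * (6 / N) ≤ 6 := by rw [mul_div_assoc', div_le_iff₀ hN0]; linarith
          rw [← exp_nat_mul, exp_le_exp]
          linarith
      _ ≤ (1 - 6 / N) ^ m :=
          pow_le_pow_left₀ (exp_pos _).le (exp_neg_two_mul_le_one_sub hx0 hx) _
      _ ≤ (1 - 6 / N) ^ (m - 1) := pow_le_pow_of_le_one (by linarith) (by linarith) (by omega)
  have hmN : 1 / 2 ≤ m * (1 / N) := by rw [hN]; field_simp; linarith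
  nlinarith [exp_pos (-12)]

theorem one_div_sixteen_pow_mul_sqrt_two_pi_le :
    (1 / 16 : ℝ) ^ 100 * √(2 * π) ≤ exp (-12) / 2 := by
  have hπ : √(2 * π) ≤ 3 := (sqrt_le_left (by norm_num)).2 (by linarith [pi_lt_d2])
  have he : exp 12 ≤ 3 ^ 12 := by
    rw [show (12 : ℝ) = (12 : ℕ) * 1 by norm_num, exp_nat_mul]
    exact pow_le_pow_left₀ (exp_pos 1).le (exp_one_lt_d9.trans (by norm_num)).le 12
  rw [exp_neg, ← one_div]
  calc (1 / 16 : ℝ) ^ 100 * √(2 * π) ≤ (1 / 16) ^ 100 * 3 := by gcongr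
    _ ≤ 1 / 3 ^ 12 / 2 := by norm_num
    _ ≤ 1 / exp 12 / 2 := by gcongr

theorem one_div_sixteen_pow_mul_pow_succ_mul_sqrt_le {ρ : ℝ} (hρ : 0 < ρ) {m : ℕ}
    (hm : 12 ≤ m) :
    (1 / 16) ^ 100 * ρ ^ (m + 1) * √(2 * π / (m + 1))
      ≤ ρ / √(m + 1) * ((ρ * (1 - 5 / (m + 1))) ^ m - (ρ * (1 - 6 / (m + 1))) ^ m) :=
  calc (1 / 16) ^ 100 * ρ ^ (m + 1) * √(2 * π / (m + 1))
      = ρ ^ (m + 1) / √(m + 1) * ((1 / 16) ^ 100 * √(2 * π)) := by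
        rw [sqrt_div' _ (by positivity : (0 : ℝ) ≤ m + 1)]; ring
    _ ≤ ρ ^ (m + 1) / √(m + 1) * ((1 - 5 / (m + 1)) ^ m - (1 - 6 / (m + 1)) ^ m) := by
        gcongr
        exact one_div_sixteen_pow_mul_sqrt_two_pi_le.trans
          (exp_neg_twelve_div_two_le_one_sub_pow_sub_one_sub_pow hm)
    _ = ρ / √(m + 1) * ((ρ * (1 - 5 / (m + 1))) ^ m - (ρ * (1 - 6 / (m + 1))) ^ m) := by
        rw [mul_pow, mul_pow, pow_succ]; ring

theorem MeasureTheory.Measure.addHaar_norm_mem_Icc {E : Type*} [NormedAddCommGroup E]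
    [NormedSpace ℝ E] [MeasurableSpace E] [BorelSpace E] [FiniteDimensional ℝ E] [Nontrivial E]
    (μ : Measure E) [μ.IsAddHaarMeasure] {r₁ r₂ : ℝ} (h₁ : 0 ≤ r₁) (h₁₂ : r₁ ≤ r₂) :
    μ {z | ‖z‖ ∈ Icc r₁ r₂}
      = .ofReal (r₂ ^ finrank ℝ E - r₁ ^ finrank ℝ E) * μ (ball 0 1) := by
  have hshell : {z : E | ‖z‖ ∈ Icc r₁ r₂} = closedBall 0 r₂ \ ball 0 r₁ := by
    ext z; simp [and_comm]
  rw [hshell, measure_sdiff (ball_subset_closedBall.trans (closedBall_subset_closedBall h₁₂))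
      measurableSet_ball.nullMeasurableSet measure_ball_lt_top.ne,
    addHaar_closedBall μ _ (h₁.trans h₁₂), addHaar_ball μ _ h₁,
    ← ENNReal.sub_mul (fun _ _ => measure_ball_lt_top.ne), ENNReal.ofReal_sub _ (by positivity)]

theorem EuclideanSpace.volume_ball_zero_one (k : ℕ) :
    volume (ball (0 : EuclideanSpace ℝ (Fin k)) 1) = .ofReal (√π ^ k / Gamma (k / 2 + 1)) := by
  rcases Nat.eq_zero_or_pos k with rfl | hk
  · simp [volume_euclideanSpace_eq_dirac]
  · have : Nonempty (Fin k) := ⟨⟨0, hk⟩⟩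
    simp [EuclideanSpace.volume_ball]

section InnerProductSpace

variable {E : Type*} [NormedAddCommGroup E] [InnerProductSpace ℝ E]

theorem InnerProductSpace.volume_ball_zero_one_le [FiniteDimensional ℝ E] [MeasurableSpace E]
    [BorelSpace E] {m : ℕ} (hE : finrank ℝ E = m + 1) :
    volume (ball (0 : E) 1)
      ≤ .ofReal √(2 * π / (m + 1)) * volume (ball (0 : EuclideanSpace ℝ (Fin m)) 1) := by
  have : Nontrivial E := Module.nontrivial_of_finrank_eq_succ hE
  rw [InnerProductSpace.volume_ball, hE, EuclideanSpace.volume_ball_zero_one,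
    ENNReal.ofReal_one, one_pow, one_mul, ← ENNReal.ofReal_mul (sqrt_nonneg _)]
  apply ENNReal.ofReal_le_ofReal
  set s : ℝ := (m + 1) / 2 with hs
  have hs0 : 0 < s := by positivity
  have hΓ := sqrt_mul_Gamma_add_half_le hs0
  rw [show s + 1 / 2 = m / 2 + 1 by ring] at hΓ
  have h2π : √(2 * π / (m + 1)) = √π / √s := by
    rw [← sqrt_div pi_nonneg, hs]
    congr 1
    field_simp
  push_cast
  rw [h2π, ← hs, show (m + 1 : ℝ) / 2 + 1 = s + 1 by ring, pow_succ]
  calc √π ^ m * √π / Gamma (s + 1) ≤ √π ^ m * √π / (√s * Gamma (m / 2 + 1)) :=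
        div_le_div_of_nonneg_left (by positivity)
          (mul_pos (sqrt_pos.2 hs0) (Gamma_pos_of_pos (by positivity))) hΓ
    _ = √π / √s * (√π ^ m / Gamma (m / 2 + 1)) := by field_simp

def cylindricalSet (u : E) (I J : Set ℝ) : Set E := {y | ⟪u, y⟫ ∈ I ∧ ‖y - ⟪u, y⟫ • u‖ ∈ J}

theorem LinearIsometryEquiv.preimage_cylindricalSet {F : Type*} [NormedAddCommGroup F]
    [InnerProductSpace ℝ F] (f : E ≃ₗᵢ[ℝ] F) (u : E) (I J : Set ℝ) :
    f ⁻¹' cylindricalSet (f u) I J = cylindricalSet u I J := by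
  ext y
  simp only [cylindricalSet, mem_preimage, mem_ofPred_eq, inner_map_map]
  rw [← map_smul, ← map_sub, norm_map]

theorem measurableSet_cylindricalSet [MeasurableSpace E] [OpensMeasurableSpace E] (u : E)
    {I J : Set ℝ} (hI : MeasurableSet I) (hJ : MeasurableSet J) :
    MeasurableSet (cylindricalSet u I J) := by
  have hc : Continuous fun y : E => ⟪u, y⟫ := continuous_const.inner continuous_id
  exact (hc.measurable hI).inter
    ((continuous_id.sub (hc.smul continuous_const)).norm.measurable hJ)

theorem EuclideanSpace.norm_sub_smul_single_zero {m : ℕ} (y : EuclideanSpace ℝ (Fin (m + 1))) :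
    ‖y - y 0 • EuclideanSpace.single 0 1‖ = ‖WithLp.toLp 2 (Fin.tail (WithLp.ofLp y))‖ := by
  simp only [EuclideanSpace.norm_eq, Fin.sum_univ_succ]
  simp [Fin.tail]

theorem volume_cylindricalSet_single {m : ℕ} {I J : Set ℝ} (hI : MeasurableSet I)
    (hJ : MeasurableSet J) :
    volume (cylindricalSet (EuclideanSpace.single 0 1 : EuclideanSpace ℝ (Fin (m + 1))) I J)
      = volume I * volume {z : EuclideanSpace ℝ (Fin m) | ‖z‖ ∈ J} := by
  set K : Set (EuclideanSpace ℝ (Fin m)) := {z | ‖z‖ ∈ J}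
  have hK : MeasurableSet K := measurable_norm hJ
  have hsplit := ((MeasurePreserving.id volume).prod (PiLp.volume_preserving_toLp (Fin m))).comp
    ((volume_preserving_piFinSuccAbove (fun _ => ℝ) 0).comp (PiLp.volume_preserving_ofLp _))
  have hset : cylindricalSet (EuclideanSpace.single 0 1 : EuclideanSpace ℝ (Fin (m + 1))) I J
      = (Prod.map id (WithLp.toLp 2) ∘ MeasurableEquiv.piFinSuccAbove (fun _ => ℝ) 0 ∘
          WithLp.ofLp) ⁻¹' I ×ˢ K := by
    ext y
    simp only [cylindricalSet, EuclideanSpace.inner_single_left, map_one, one_mul,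
      EuclideanSpace.norm_sub_smul_single_zero]
    rfl
  rw [hset, hsplit.measure_preimage (hI.prod hK).nullMeasurableSet, Measure.prod_prod]

theorem OrthonormalBasis.exists_apply_zero_eq {m : ℕ} (hE : finrank ℝ E = m + 1) {u : E}
    (hu : ‖u‖ = 1) : ∃ b : OrthonormalBasis (Fin (m + 1)) ℝ E, b 0 = u := by
  have := Module.finite_of_finrank_eq_succ hE
  have hv : Orthonormal ℝ (({0} : Set (Fin (m + 1))).domRestrict fun _ => u) := by
    rw [orthonormal_iff_ite]
    rintro ⟨i, rfl⟩ ⟨j, rfl⟩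
    simp [hu]
  obtain ⟨b, hb⟩ := hv.exists_orthonormalBasis_extension_of_card_eq (by simpa using hE)
  exact ⟨b, hb 0 rfl⟩

theorem volume_cylindricalSet [FiniteDimensional ℝ E] [MeasurableSpace E] [BorelSpace E]
    {m : ℕ} (hE : finrank ℝ E = m + 1) {u : E} (hu : ‖u‖ = 1) {I J : Set ℝ}
    (hI : MeasurableSet I) (hJ : MeasurableSet J) :
    volume (cylindricalSet u I J)
      = volume I * volume {z : EuclideanSpace ℝ (Fin m) | ‖z‖ ∈ J} := by
  obtain ⟨b, rfl⟩ := OrthonormalBasis.exists_apply_zero_eq hE hu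
  rw [← b.repr.preimage_cylindricalSet, b.measurePreserving_repr.measure_preimage
    (measurableSet_cylindricalSet _ hI hJ).nullMeasurableSet, b.repr_self,
    volume_cylindricalSet_single hI hJ]

def escapeSet (x₀ : E) (ρ : ℝ) : Set E := {y | ‖y‖ ≤ ρ ∧ √(1 + ρ ^ 2) < ‖x₀ + y‖}

theorem norm_sq_eq_inner_sq_add_norm_sub_smul_sq {u : E} (hu : ‖u‖ = 1) (y : E) :
    ‖y‖ ^ 2 = ⟪u, y⟫ ^ 2 + ‖y - ⟪u, y⟫ • u‖ ^ 2 := by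
  rw [norm_sub_sq_real, inner_smul_right, real_inner_comm, norm_smul, hu, Real.norm_eq_abs,
    mul_one, sq_abs]
  ring

theorem closedBall_subset_escapeSet {x₀ : E} {ρ : ℝ} (hρ : 0 < ρ) (hρ1 : ρ < 1)
    (hx : 1 - 3 * ρ / 8 ≤ ‖x₀‖) :
    closedBall ((15 * ρ / 16 / ‖x₀‖) • x₀) (1 / 16 * ρ) ⊆ escapeSet x₀ ρ := by
  have hX : 0 < ‖x₀‖ := by linarith
  set c := (15 * ρ / 16 / ‖x₀‖) • x₀
  have hc : ‖c‖ = 15 * ρ / 16 := by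
    rw [norm_smul, norm_div, Real.norm_of_nonneg (by positivity : 0 ≤ 15 * ρ / 16), norm_norm,
      div_mul_cancel₀ _ hX.ne']
  have hxc : ‖x₀ + c‖ = ‖x₀‖ + 15 * ρ / 16 := by
    rw [show x₀ + c = (1 + 15 * ρ / 16 / ‖x₀‖) • x₀ by rw [add_smul, one_smul], norm_smul,
      Real.norm_of_nonneg (by positivity), add_mul, one_mul, div_mul_cancel₀ _ hX.ne']
  intro y hy
  rw [mem_closedBall, dist_eq_norm] at hy
  constructor
  · calc ‖y‖ = ‖c + (y - c)‖ := by rw [add_sub_cancel]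
      _ ≤ ‖c‖ + ‖y - c‖ := norm_add_le _ _
      _ ≤ ρ := by linarith
  · have hfar : 1 + ρ / 2 ≤ ‖x₀ + y‖ :=
      calc 1 + ρ / 2 ≤ ‖x₀ + c‖ - ‖y - c‖ := by linarith
        _ ≤ ‖x₀ + y‖ := by
          rw [sub_le_iff_le_add, show x₀ + c = (x₀ + y) + -(y - c) by abel]
          exact (norm_add_le _ _).trans_eq (by rw [norm_neg])
    exact (sqrt_lt (by positivity) (norm_nonneg _)).2 (by nlinarith)

theorem cylindricalSet_subset_escapeSet {x₀ : E} {ρ N : ℝ} (hρ : 0 < ρ) (hρ1 : ρ < 1)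
    (hN : 100 ≤ N) (hx : 1 - ρ / (2 * √N) ≤ ‖x₀‖) :
    cylindricalSet (‖x₀‖⁻¹ • x₀) (Icc (2 * ρ / √N) (3 * ρ / √N))
      (Icc (ρ * (1 - 6 / N)) (ρ * (1 - 5 / N))) ⊆ escapeSet x₀ ρ := by
  set w := ρ / √N with hw
  have hN0 : 0 < N := by linarith
  have hsqrtN : 10 ≤ √N := le_sqrt_of_sq_le (by linarith)
  have hw0 : 0 < w := by positivity
  have hw10 : w ≤ 1 / 10 := by rw [hw, div_le_iff₀ (by linarith)]; nlinarith
  have hw2 : ρ ^ 2 = N * w ^ 2 := by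
    rw [hw, div_pow, sq_sqrt hN0.le]; field_simp
  have hX : 1 - w / 2 ≤ ‖x₀‖ := by rwa [hw, div_div, mul_comm √N]
  have hX0 : 0 < ‖x₀‖ := by linarith
  have hu : ‖‖x₀‖⁻¹ • x₀‖ = 1 := by
    rw [norm_smul, norm_inv, norm_norm, inv_mul_cancel₀ hX0.ne']
  rintro y ⟨⟨hs₁, hs₂⟩, hd₁, hd₂⟩
  set s := ⟪‖x₀‖⁻¹ • x₀, y⟫ with hs
  set d := ‖y - s • ‖x₀‖⁻¹ • x₀‖
  have hy : ‖y‖ ^ 2 = s ^ 2 + d ^ 2 := norm_sq_eq_inner_sq_add_norm_sub_smul_sq hu y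
  have hxy : ‖x₀ + y‖ ^ 2 = ‖x₀‖ ^ 2 + 2 * (‖x₀‖ * s) + ‖y‖ ^ 2 := by
    rw [norm_add_sq_real, hs, real_inner_smul_left, mul_inv_cancel_left₀ hX0.ne']
  rw [mul_div_assoc, ← hw] at hs₁ hs₂
  have hd0 : 0 ≤ ρ * (1 - 6 / N) := by
    have : 6 / N ≤ 1 := by rw [div_le_one hN0]; linarith
    nlinarith
  have hdhi : d ^ 2 ≤ ρ ^ 2 - 9 * w ^ 2 := by
    have : 25 / N ≤ 1 := by rw [div_le_one hN0]; linarith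
    calc d ^ 2 ≤ (ρ * (1 - 5 / N)) ^ 2 := pow_le_pow_left₀ (norm_nonneg _) hd₂ 2
      _ = ρ ^ 2 - 10 * w ^ 2 + 25 / N * w ^ 2 := by rw [mul_pow, hw2]; field_simp; ring
      _ ≤ ρ ^ 2 - 9 * w ^ 2 := by nlinarith
  have hdlo : ρ ^ 2 - 12 * w ^ 2 ≤ d ^ 2 :=
    calc ρ ^ 2 - 12 * w ^ 2 ≤ ρ ^ 2 - 12 * w ^ 2 + 36 / N * w ^ 2 :=
          le_add_of_nonneg_right (by positivity)
      _ = (ρ * (1 - 6 / N)) ^ 2 := by rw [mul_pow, hw2]; field_simp; ring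
      _ ≤ d ^ 2 := pow_le_pow_left₀ hd0 hd₁ 2
  refine ⟨?_, ?_⟩
  · nlinarith [norm_nonneg y]
  · refine (sqrt_lt (by positivity) (norm_nonneg _)).2 ?_
    have hXs : (1 - w / 2) * (2 * w) ≤ ‖x₀‖ * s :=
      mul_le_mul hX hs₁ (by positivity) hX0.le
    nlinarith

variable [FiniteDimensional ℝ E] [MeasurableSpace E] [BorelSpace E]

theorem le_volume_escapeSet_of_finrank_le {x₀ : E} {ρ : ℝ} (hρ : 0 < ρ) (hρ1 : ρ < 1)
    (hE : finrank ℝ E ≤ 100) (hx : 1 - 3 * ρ / 8 ≤ ‖x₀‖) :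
    .ofReal ((1 / 16) ^ 100) * volume (closedBall (0 : E) ρ) ≤ volume (escapeSet x₀ ρ) :=
  calc .ofReal ((1 / 16) ^ 100) * volume (closedBall (0 : E) ρ)
      ≤ .ofReal ((1 / 16) ^ finrank ℝ E) * volume (closedBall (0 : E) ρ) := by
        gcongr ?_ * _
        exact ENNReal.ofReal_le_ofReal (pow_le_pow_of_le_one (by norm_num) (by norm_num) hE)
    _ = volume (closedBall ((15 * ρ / 16 / ‖x₀‖) • x₀) (1 / 16 * ρ)) :=
        (Measure.addHaar_closedBall_mul _ _ (by norm_num) hρ.le).symm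
    _ ≤ volume (escapeSet x₀ ρ) := measure_mono (closedBall_subset_escapeSet hρ hρ1 hx)

theorem le_volume_escapeSet_of_finrank_eq_succ {x₀ : E} {ρ : ℝ} (hρ : 0 < ρ) (hρ1 : ρ < 1)
    {m : ℕ} (hE : finrank ℝ E = m + 1) (hm : 99 ≤ m) (hx : 1 - ρ / (2 * √(m + 1)) ≤ ‖x₀‖) :
    .ofReal ((1 / 16) ^ 100) * volume (closedBall (0 : E) ρ) ≤ volume (escapeSet x₀ ρ) := by
  have : Nonempty (Fin m) := ⟨⟨0, by omega⟩⟩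
  have hN : (100 : ℝ) ≤ m + 1 := by norm_cast; omega
  have hX : 0 < ‖x₀‖ := by
    have : ρ / (2 * √(m + 1)) < 1 := by
      rw [div_lt_one (by positivity)]
      nlinarith [one_le_sqrt.2 (by linarith : (1 : ℝ) ≤ m + 1)]
    linarith
  have hu : ‖‖x₀‖⁻¹ • x₀‖ = 1 := by rw [norm_smul, norm_inv, norm_norm, inv_mul_cancel₀ hX.ne']
  have hr : 0 ≤ ρ * (1 - 6 / (m + 1)) :=
    mul_nonneg hρ.le (sub_nonneg.2 ((div_le_one (by positivity)).2 (by linarith)))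
  have hr' : ρ * (1 - 6 / (m + 1)) ≤ ρ * (1 - 5 / (m + 1)) := by gcongr; norm_num
  calc .ofReal ((1 / 16) ^ 100) * volume (closedBall (0 : E) ρ)
      = .ofReal ((1 / 16) ^ 100) * (.ofReal (ρ ^ (m + 1)) * volume (ball (0 : E) 1)) := by
        rw [Measure.addHaar_closedBall _ _ hρ.le, hE]
    _ ≤ .ofReal ((1 / 16) ^ 100) * (.ofReal (ρ ^ (m + 1)) *
          (.ofReal √(2 * π / (m + 1)) * volume (ball (0 : EuclideanSpace ℝ (Fin m)) 1))) := by
        gcongr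
        exact InnerProductSpace.volume_ball_zero_one_le hE
    _ = .ofReal ((1 / 16) ^ 100 * ρ ^ (m + 1) * √(2 * π / (m + 1))) *
          volume (ball (0 : EuclideanSpace ℝ (Fin m)) 1) := by
        rw [ENNReal.ofReal_mul (by positivity), ENNReal.ofReal_mul (by positivity)]; ring
    _ ≤ .ofReal (ρ / √(m + 1) * ((ρ * (1 - 5 / (m + 1))) ^ m - (ρ * (1 - 6 / (m + 1))) ^ m)) *
          volume (ball (0 : EuclideanSpace ℝ (Fin m)) 1) := by
        gcongr ?_ * _
        exact ENNReal.ofReal_le_ofReal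
          (one_div_sixteen_pow_mul_pow_succ_mul_sqrt_le hρ (by omega))
    _ = volume (cylindricalSet (‖x₀‖⁻¹ • x₀) (Icc (2 * ρ / √(m + 1)) (3 * ρ / √(m + 1)))
          (Icc (ρ * (1 - 6 / (m + 1))) (ρ * (1 - 5 / (m + 1))))) := by
        rw [volume_cylindricalSet hE hu measurableSet_Icc measurableSet_Icc, Real.volume_Icc,
          show 3 * ρ / √(m + 1) - 2 * ρ / √(m + 1) = ρ / √(m + 1) by ring,
          Measure.addHaar_norm_mem_Icc _ hr hr', finrank_euclideanSpace_fin, ← mul_assoc,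
          ← ENNReal.ofReal_mul (by positivity)]
    _ ≤ volume (escapeSet x₀ ρ) := measure_mono (cylindricalSet_subset_escapeSet hρ hρ1 hN hx)

end InnerProductSpace

theorem half_min_mul_sqrt_div_le {ρ n : ℝ} (hn : 0 < n) :
    1 / 2 * min (ρ * √n) 1 / n ≤ ρ / (2 * √n) :=
  calc 1 / 2 * min (ρ * √n) 1 / n ≤ 1 / 2 * (ρ * √n) / n := by gcongr; exact min_le_left _ _
    _ = ρ / (2 * √n) := by
        field_simp
        rw [sq_sqrt hn.le]

/-- Inequality (1.4): there is a universal `c₁ > 0` such that for `ρ ∈ (0,1)`,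
`n ≥ 2`, `τ = (1/2)·min{ρ√n, 1}` and `1 - τ/n ≤ |x₀| ≤ 1`, the set of points
`y` with `|y| ≤ ρ` and `|x₀ + y| > (1 + ρ²)^{1/2}` has volume at least
`c₁·λ(ρBⁿ)`. -/
theorem cap_volume_lower_bound :
    ∃ c₁ : ℝ, 0 < c₁ ∧
      ∀ (ρ : ℝ), ρ ∈ Set.Ioo (0 : ℝ) 1 →
      ∀ (n : ℕ), 2 ≤ n →
      ∀ (x₀ : EuclideanSpace ℝ (Fin n)),
        1 - (1 / 2) * min (ρ * Real.sqrt n) 1 / n ≤ ‖x₀‖ → ‖x₀‖ ≤ 1 →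
        ENNReal.ofReal c₁ * volume (Metric.closedBall (0 : EuclideanSpace ℝ (Fin n)) ρ)
          ≤ volume {y : EuclideanSpace ℝ (Fin n) |
              ‖y‖ ≤ ρ ∧ Real.sqrt (1 + ρ ^ 2) < ‖x₀ + y‖} := by
  refine ⟨(1 / 16) ^ 100, by positivity, ?_⟩
  rintro ρ ⟨hρ, hρ1⟩ n hn x₀ hx -
  have hx' : 1 - ρ / (2 * √n) ≤ ‖x₀‖ :=
    (sub_le_sub_left (half_min_mul_sqrt_div_le (by positivity)) 1).trans hx
  have hdim : finrank ℝ (EuclideanSpace ℝ (Fin n)) = n := finrank_euclideanSpace_fin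
  rcases le_or_gt n 100 with hsmall | hlarge
  · have hn' : (2 : ℝ) ≤ n := by exact_mod_cast hn
    have hsqrt : (4 / 3 : ℝ) ≤ √n := le_sqrt_of_sq_le (by linarith)
    have : ρ / (2 * √n) ≤ 3 * ρ / 8 := by
      rw [div_le_div_iff₀ (by positivity) (by norm_num)]; nlinarith
    exact le_volume_escapeSet_of_finrank_le hρ hρ1 (hdim.trans_le hsmall) (by linarith)
  · obtain ⟨m, rfl⟩ : ∃ m, n = m + 1 := ⟨n - 1, by omega⟩
    push_cast at hx'
    exact le_volume_escapeSet_of_finrank_eq_succ hρ hρ1 hdim (by omega) hx'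
end

section
/- Let n be a positive integer, let A, B ⊂ ℝⁿ be measurable with 0 < λ(A) < ∞ and 0 < λ(B) < ∞, let δ ∈ [0,1), and let Θ ⊂ A × B be measurable with λ(Θ) ≥ (1 − δ)·λ(A)·λ(B). Then the outer Lebesgue measure of the restricted sum satisfies λ(A +_Θ B) ≥ (1 − δ)·λ(A). -/
open MeasureTheory

/-- The restricted (to `Θ`) Minkowski sum `A +_Θ B = { x + y : (x, y) ∈ Θ }`. -/
def restrictedSum {n : ℕ} (Θ : Set (EuclideanSpace ℝ (Fin n) × EuclideanSpace ℝ (Fin n))) :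
    Set (EuclideanSpace ℝ (Fin n)) :=
  (fun p => p.1 + p.2) '' Θ

/-- If `λ(Θ) ≥ (1 - δ)·λ(A)·λ(B)` then the (outer) measure of `A +_Θ B` is at
least `(1 - δ)·λ(A)`. -/
theorem restrictedSum_volume_fubini_bound (n : ℕ) (hn : 0 < n)
    (A B : Set (EuclideanSpace ℝ (Fin n)))
    (hA : MeasurableSet A) (hB : MeasurableSet B)
    (hA0 : 0 < volume A) (hA1 : volume A < ⊤) (hB0 : 0 < volume B) (hB1 : volume B < ⊤)
    (δ : ℝ) (hδ : δ ∈ Set.Ico (0 : ℝ) 1)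
    (Θ : Set (EuclideanSpace ℝ (Fin n) × EuclideanSpace ℝ (Fin n)))
    (hΘm : MeasurableSet Θ) (hΘ : Θ ⊆ A ×ˢ B)
    (hΘvol : ENNReal.ofReal (1 - δ) * (volume A * volume B) ≤ volume Θ) :
    ENNReal.ofReal (1 - δ) * volume A ≤ volume (restrictedSum Θ) := by
  classical
  set S := restrictedSum Θ with hS
  set S' := toMeasurable volume S with hS'
  have hSS' : S ⊆ S' := subset_toMeasurable _ _
  have key : volume Θ ≤ volume S' * volume B := by
    rw [Measure.volume_eq_prod, Measure.prod_apply_symm hΘm]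
    have hpt : ∀ y, volume ((fun x => (x, y)) ⁻¹' Θ)
        ≤ B.indicator (fun _ => volume S') y := by
      intro y
      by_cases hy : y ∈ B
      · rw [Set.indicator_of_mem hy]
        have hsub : (fun x => (x, y)) ⁻¹' Θ ⊆ (fun x => x + y) ⁻¹' S' := by
          intro x hx
          exact hSS' ⟨(x, y), hx, rfl⟩
        calc volume ((fun x => (x, y)) ⁻¹' Θ)
            ≤ volume ((fun x => x + y) ⁻¹' S') := measure_mono hsub
          _ = volume S' := measure_preimage_add_right volume y S'
      · rw [Set.indicator_of_notMem hy]
        have hempty : (fun x => (x, y)) ⁻¹' Θ = ∅ := by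
          ext x
          simp only [Set.mem_preimage, Set.mem_empty_iff_false, iff_false]
          intro hx
          exact hy (hΘ hx).2
        simp [hempty]
    calc ∫⁻ y, volume ((fun x => (x, y)) ⁻¹' Θ)
        ≤ ∫⁻ y, B.indicator (fun _ => volume S') y := lintegral_mono hpt
      _ = volume S' * volume B := by
          simp [lintegral_indicator, hB, mul_comm]
  have hchain : ENNReal.ofReal (1 - δ) * volume A * volume B ≤ volume S' * volume B := by
    calc ENNReal.ofReal (1 - δ) * volume A * volume B
        = ENNReal.ofReal (1 - δ) * (volume A * volume B) := by ring
      _ ≤ volume Θ := hΘvol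
      _ ≤ volume S' * volume B := key
  have hfin : ENNReal.ofReal (1 - δ) * volume A ≤ volume S' :=
    (ENNReal.mul_le_mul_iff_left hB0.ne' hB1.ne).mp hchain
  calc ENNReal.ofReal (1 - δ) * volume A ≤ volume S' := hfin
    _ = volume S := measure_toMeasurable S
end

section
/- There exists a constant α > 0 such that for every positive integer n there exist measurable sets A, B ⊂ ℝⁿ with 0 < λ(A) < ∞, 0 < λ(B) < ∞ and a measurable set Θ ⊂ A × B with λ(Θ) > α·λ(A)·λ(B), for which λ(A +_Θ B)^{2/n} < λ(A)^{2/n} + λ(B)^{2/n}. -/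
open MeasureTheory

/-!
Take `A = B` the unit ball and `Θ` the pairs `(x, y)` of the ball of radius `ρ < 1` with
`⟪x, y⟫ ≤ 0`. For every `x`, either `y` or `-y` lies in the section of `Θ` over `x`, so `Θ` fills
at least half of the product of the two `ρ`-balls. On the other hand
`‖x + y‖² = ‖x‖² + 2⟪x, y⟫ + ‖y‖² ≤ 2ρ²`, so `A +_Θ B` lies in the ball of radius `√2 ρ`,
whence `λ(A +_Θ B)^{2/n} ≤ 2ρ² λ(A)^{2/n} < λ(A)^{2/n} + λ(B)^{2/n}`. Choosing `ρⁿ = 3/4`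
keeps `λ(Θ) ≥ (9/32) λ(A) λ(B)` in every dimension.
-/

open Metric Set

open scoped RealInnerProductSpace

theorem MeasureTheory.Measure.addHaar_closedBall_rpow_div_finrank {E : Type*} [NormedAddCommGroup E]
    [NormedSpace ℝ E] [MeasurableSpace E] [BorelSpace E] [FiniteDimensional ℝ E]
    (μ : Measure E) [μ.IsAddHaarMeasure] (hE : 0 < Module.finrank ℝ E) (x : E) {r p : ℝ}
    (hr : 0 ≤ r) (hp : 0 ≤ p) :
    μ (closedBall x r) ^ (p / Module.finrank ℝ E)
      = ENNReal.ofReal (r ^ p) * μ (closedBall 0 1) ^ (p / Module.finrank ℝ E) := by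
  have hdiv : 0 ≤ p / Module.finrank ℝ E := by positivity
  rw [Measure.addHaar_closedBall' μ x hr, ENNReal.mul_rpow_of_nonneg _ _ hdiv,
    ENNReal.ofReal_rpow_of_nonneg (by positivity) hdiv, ← Real.rpow_natCast,
    ← Real.rpow_mul hr, mul_div_cancel₀ _ (by positivity)]

section ObtuseBallPairs

variable {E : Type*} [NormedAddCommGroup E] [InnerProductSpace ℝ E]

def obtuseBallPairs (ρ : ℝ) : Set (E × E) :=
  {p | ‖p.1‖ ≤ ρ ∧ ‖p.2‖ ≤ ρ ∧ ⟪p.1, p.2⟫ ≤ 0}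

theorem isClosed_obtuseBallPairs (ρ : ℝ) : IsClosed (obtuseBallPairs (E := E) ρ) := by
  simp only [obtuseBallPairs, ofPred_and]
  exact (isClosed_le (continuous_norm.comp continuous_fst) continuous_const).inter <|
    (isClosed_le (continuous_norm.comp continuous_snd) continuous_const).inter <|
      isClosed_le continuous_inner continuous_const

theorem obtuseBallPairs_subset (ρ : ℝ) :
    obtuseBallPairs ρ ⊆ closedBall (0 : E) ρ ×ˢ closedBall (0 : E) ρ := by
  rintro ⟨x, y⟩ ⟨hx, hy, -⟩
  exact ⟨mem_closedBall_zero_iff.mpr hx, mem_closedBall_zero_iff.mpr hy⟩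

theorem norm_add_le_sqrt_two_mul_of_inner_nonpos {x y : E} {ρ : ℝ} (hx : ‖x‖ ≤ ρ) (hy : ‖y‖ ≤ ρ)
    (hxy : ⟪x, y⟫ ≤ 0) : ‖x + y‖ ≤ √2 * ρ := by
  have hρ : 0 ≤ ρ := (norm_nonneg x).trans hx
  rw [← Real.sqrt_sq hρ, ← Real.sqrt_mul zero_le_two, Real.le_sqrt (norm_nonneg _) (by positivity),
    norm_add_sq_real]
  nlinarith [norm_nonneg x, norm_nonneg y]

theorem image_add_obtuseBallPairs_subset (ρ : ℝ) :
    (fun p : E × E => p.1 + p.2) '' obtuseBallPairs ρ ⊆ closedBall 0 (√2 * ρ) := by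
  rintro _ ⟨⟨x, y⟩, ⟨hx, hy, hxy⟩, rfl⟩
  simpa using norm_add_le_sqrt_two_mul_of_inner_nonpos hx hy hxy

variable [MeasurableSpace E] [BorelSpace E] (μ : Measure E)

theorem measure_closedBall_le_two_mul_measure_preimage_mk [μ.IsNegInvariant] {ρ : ℝ} {x : E}
    (hx : ‖x‖ ≤ ρ) : μ (closedBall 0 ρ) ≤ 2 * μ (Prod.mk x ⁻¹' obtuseBallPairs ρ) := by
  set S := Prod.mk x ⁻¹' obtuseBallPairs ρ
  have hcover : closedBall (0 : E) ρ ⊆ S ∪ -S := by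
    intro y hy
    rw [mem_closedBall_zero_iff] at hy
    rcases le_total ⟪x, y⟫ 0 with h | h
    · exact Or.inl ⟨hx, hy, h⟩
    · exact Or.inr ⟨hx, by simpa using hy, by simpa using h⟩
  calc μ (closedBall 0 ρ) ≤ μ (S ∪ -S) := measure_mono hcover
    _ ≤ μ S + μ (-S) := measure_union_le _ _
    _ = 2 * μ S := by rw [Measure.measure_neg, two_mul]

theorem measure_closedBall_mul_self_le_two_mul_prod [SecondCountableTopology E] [SFinite μ]
    [μ.IsNegInvariant] (ρ : ℝ) :
    μ (closedBall 0 ρ) * μ (closedBall 0 ρ) ≤ 2 * μ.prod μ (obtuseBallPairs ρ) := by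
  rw [Measure.prod_apply (isClosed_obtuseBallPairs ρ).measurableSet,
    ← lintegral_const_mul' _ _ ENNReal.ofNat_ne_top, ← setLIntegral_const]
  refine (setLIntegral_mono' measurableSet_closedBall fun x hx => ?_).trans
    (setLIntegral_le_lintegral _ _)
  exact measure_closedBall_le_two_mul_measure_preimage_mk μ (mem_closedBall_zero_iff.mp hx)

variable [FiniteDimensional ℝ E] [μ.IsAddHaarMeasure]

theorem le_prod_measure_obtuseBallPairs {ρ : ℝ} (hρ : 0 ≤ ρ) :
    ENNReal.ofReal (ρ ^ (2 * Module.finrank ℝ E) / 2) * (μ (closedBall 0 1) * μ (closedBall 0 1))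
      ≤ μ.prod μ (obtuseBallPairs ρ) := by
  have h := measure_closedBall_mul_self_le_two_mul_prod μ ρ
  rw [Measure.addHaar_closedBall' μ 0 hρ] at h
  refine (ENNReal.mul_le_mul_iff_right two_ne_zero ENNReal.ofNat_ne_top).mp (le_of_eq_of_le ?_ h)
  rw [← mul_assoc, ← ENNReal.ofReal_ofNat, ← ENNReal.ofReal_mul zero_le_two,
    mul_div_cancel₀ _ two_ne_zero, pow_mul', sq, ENNReal.ofReal_mul (by positivity)]
  ring

theorem measure_image_add_obtuseBallPairs_rpow_le (hE : 0 < Module.finrank ℝ E) {ρ : ℝ}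
    (hρ : 0 ≤ ρ) :
    μ ((fun p : E × E => p.1 + p.2) '' obtuseBallPairs ρ) ^ ((2 : ℝ) / Module.finrank ℝ E)
      ≤ ENNReal.ofReal (2 * ρ ^ 2) * μ (closedBall 0 1) ^ ((2 : ℝ) / Module.finrank ℝ E) := by
  calc μ ((fun p : E × E => p.1 + p.2) '' obtuseBallPairs ρ) ^ ((2 : ℝ) / Module.finrank ℝ E)
      ≤ μ (closedBall 0 (√2 * ρ)) ^ ((2 : ℝ) / Module.finrank ℝ E) :=
        ENNReal.rpow_le_rpow (measure_mono (image_add_obtuseBallPairs_subset ρ)) (by positivity)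
    _ = ENNReal.ofReal (2 * ρ ^ 2) * μ (closedBall 0 1) ^ ((2 : ℝ) / Module.finrank ℝ E) := by
        rw [Measure.addHaar_closedBall_rpow_div_finrank μ hE 0 (by positivity) zero_le_two,
          Real.rpow_two, mul_pow, Real.sq_sqrt zero_le_two]

end ObtuseBallPairs

/-- Optimality (Remark 1.4, first part): for some `α > 0`, in every dimension
there are sets `A`, `B` and `Θ ⊂ A × B` with `λ(Θ) > α·λ(A)·λ(B)` for which
`λ(A +_Θ B)^{2/n} < λ(A)^{2/n} + λ(B)^{2/n}`. -/
theorem restricted_minkowski_optimality_alpha :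
    ∃ α : ℝ, 0 < α ∧
      ∀ (n : ℕ), 0 < n →
        ∃ (A B : Set (EuclideanSpace ℝ (Fin n)))
          (Θ : Set (EuclideanSpace ℝ (Fin n) × EuclideanSpace ℝ (Fin n))),
          MeasurableSet A ∧ MeasurableSet B ∧
          0 < volume A ∧ volume A < ⊤ ∧ 0 < volume B ∧ volume B < ⊤ ∧
          MeasurableSet Θ ∧ Θ ⊆ A ×ˢ B ∧
          ENNReal.ofReal α * (volume A * volume B) < volume Θ ∧
          volume (restrictedSum Θ) ^ ((2 : ℝ) / n)
            < volume A ^ ((2 : ℝ) / n) + volume B ^ ((2 : ℝ) / n) := by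
  refine ⟨1 / 8, by norm_num, fun n hn => ?_⟩
  set ρ : ℝ := (3 / 4) ^ (n⁻¹ : ℝ)
  have hρn : ρ ^ n = 3 / 4 := Real.rpow_inv_natCast_pow (by norm_num) hn.ne'
  have hρ0 : 0 ≤ ρ := by positivity
  have hρ1 : ρ < 1 := Real.rpow_lt_one (by norm_num) (by norm_num) (by positivity)
  set ι := volume (closedBall (0 : EuclideanSpace ℝ (Fin n)) 1)
  have hι0 : 0 < ι := measure_closedBall_pos _ _ one_pos
  have hιtop : ι < ⊤ := measure_closedBall_lt_top
  refine ⟨closedBall 0 1, closedBall 0 1, obtuseBallPairs ρ, measurableSet_closedBall,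
    measurableSet_closedBall, hι0, hιtop, hι0, hιtop, (isClosed_obtuseBallPairs ρ).measurableSet,
    (obtuseBallPairs_subset ρ).trans (prod_mono (closedBall_subset_closedBall hρ1.le)
      (closedBall_subset_closedBall hρ1.le)), ?_, ?_⟩
  · calc ENNReal.ofReal (1 / 8) * (ι * ι) < ENNReal.ofReal (ρ ^ (2 * n) / 2) * (ι * ι) := by
          refine ENNReal.mul_lt_mul_left (mul_ne_zero hι0.ne' hι0.ne')
            (ENNReal.mul_ne_top hιtop.ne hιtop.ne) ?_
          rw [ENNReal.ofReal_lt_ofReal_iff (by positivity), pow_mul', hρn]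
          norm_num
      _ ≤ volume (obtuseBallPairs ρ) := by
          simpa [Measure.volume_eq_prod] using le_prod_measure_obtuseBallPairs
            (volume : Measure (EuclideanSpace ℝ (Fin n))) hρ0
  · have hι2 : ι ^ ((2 : ℝ) / n) ≠ 0 := (ENNReal.rpow_pos hι0 hιtop.ne).ne'
    have hι2top : ι ^ ((2 : ℝ) / n) ≠ ⊤ := ENNReal.rpow_ne_top_of_nonneg (by positivity) hιtop.ne
    calc volume (restrictedSum (obtuseBallPairs ρ)) ^ ((2 : ℝ) / n)
        ≤ ENNReal.ofReal (2 * ρ ^ 2) * ι ^ ((2 : ℝ) / n) := by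
          simpa [restrictedSum] using measure_image_add_obtuseBallPairs_rpow_le
            (volume : Measure (EuclideanSpace ℝ (Fin n))) (by simpa using hn) hρ0
      _ < 2 * ι ^ ((2 : ℝ) / n) := by
          refine ENNReal.mul_lt_mul_left hι2 hι2top ?_
          rw [← ENNReal.ofReal_ofNat, ENNReal.ofReal_lt_ofReal_iff zero_lt_two]
          nlinarith
      _ = ι ^ ((2 : ℝ) / n) + ι ^ ((2 : ℝ) / n) := two_mul _
end

section
/- Let n be a positive integer and δ ∈ [0, 1/2]. If A ⊂ ℝⁿ is measurable with λ(A) = 1, B ⊂ ℝⁿ is measurable with 0 < λ(B) < ∞, and Θ ⊂ A × B is measurable with λ(Θ) ≥ (1 − δ)·λ(A)·λ(B), then λ(A +_Θ B)^{2/n} ≥ 1 − 3δ/n. -/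
/-!
By Fubini, some slice `Θʸ = {x | (x, y) ∈ Θ}` is at least as large as the average over `B`,
`λ(Θʸ) ≥ (1 - δ) λ(A) = 1 - δ`, and its translate `Θʸ + y` lies in `A +_Θ B`; so
`λ(A +_Θ B) ≥ 1 - δ`. Finally, convexity of `exp` gives `2^(-2δ) ≤ 1 - δ` on `[0, 1/2]`, hence
`(1 - δ)^t ≥ exp (-2 t δ log 2) ≥ 1 - 3tδ/2` for `t ≥ 0`, as `2 log 2 < 3/2`.
-/

open MeasureTheory Real Set
open scoped ENNReal

theorem exp_neg_two_mul_log_two_mul_le_one_sub {δ : ℝ} (hδ₀ : 0 ≤ δ) (hδ : δ ≤ 1 / 2) :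
    exp (-(2 * log 2 * δ)) ≤ 1 - δ := by
  have h := convexOn_exp.2 (mem_univ 0) (mem_univ (-log 2))
    (by linarith : 0 ≤ 1 - 2 * δ) (by linarith : 0 ≤ 2 * δ) (by ring)
  simp only [smul_eq_mul, mul_zero, zero_add, exp_zero, exp_neg, exp_log two_pos] at h
  rw [show -(2 * log 2 * δ) = 2 * δ * -log 2 by ring]
  linarith

theorem one_sub_mul_le_one_sub_rpow {δ t : ℝ} (hδ₀ : 0 ≤ δ) (hδ : δ ≤ 1 / 2) (ht : 0 ≤ t) :
    1 - 3 / 2 * t * δ ≤ (1 - δ) ^ t := by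
  have hlog : log 2 ≤ 3 / 4 := by linarith [log_two_lt_d9]
  calc 1 - 3 / 2 * t * δ ≤ -(2 * log 2 * δ) * t + 1 := by nlinarith [mul_nonneg ht hδ₀]
    _ ≤ exp (-(2 * log 2 * δ) * t) := add_one_le_exp _
    _ = exp (-(2 * log 2 * δ)) ^ t := exp_mul _ _
    _ ≤ (1 - δ) ^ t :=
      rpow_le_rpow (exp_pos _).le (exp_neg_two_mul_log_two_mul_le_one_sub hδ₀ hδ) ht

theorem exists_le_measure_slice_of_le_measure_prod {α β : Type*} [MeasurableSpace α]
    [MeasurableSpace β] {μ : Measure α} {ν : Measure β} [SFinite μ] [SFinite ν]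
    {Θ : Set (α × β)} {A : Set α} {B : Set β} {c : ℝ≥0∞} (hΘ : MeasurableSet Θ)
    (hΘAB : Θ ⊆ A ×ˢ B) (hA : μ A ≠ ∞) (hB₀ : ν B ≠ 0) (hB : ν B ≠ ∞)
    (hc : c * (μ A * ν B) ≤ μ.prod ν Θ) :
    ∃ y, c * μ A ≤ μ ((fun x => (x, y)) ⁻¹' Θ) := by
  set f : β → ℝ≥0∞ := fun y => μ ((fun x => (x, y)) ⁻¹' Θ)
  have hf_int : ∫⁻ y, f y ∂ν = μ.prod ν Θ := (Measure.prod_apply_symm hΘ).symm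
  have hf_supp : Function.support f ⊆ B := fun y hy => by
    obtain ⟨x, hx⟩ := nonempty_of_measure_ne_zero hy
    exact (hΘAB hx).2
  have hf_restrict : ∫⁻ y in B, f y ∂ν = μ.prod ν Θ := by
    rw [setLIntegral_eq_of_support_subset hf_supp, hf_int]
  have hΘ_fin : μ.prod ν Θ ≠ ∞ :=
    ((measure_mono hΘAB).trans_lt
      (by rw [Measure.prod_prod]; exact ENNReal.mul_lt_top hA.lt_top hB.lt_top)).ne
  obtain ⟨y, hy⟩ := exists_laverage_le (μ := ν.restrict B) (Measure.restrict_eq_zero.not.2 hB₀)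
    (hf_restrict ▸ hΘ_fin)
  refine ⟨y, le_trans ?_ hy⟩
  rw [laverage_eq, Measure.restrict_apply_univ, hf_restrict,
    ENNReal.le_div_iff_mul_le (Or.inl hB₀) (Or.inl hB), mul_assoc]
  exact hc

theorem volume_slice_le_volume_restrictedSum {n : ℕ}
    (Θ : Set (EuclideanSpace ℝ (Fin n) × EuclideanSpace ℝ (Fin n))) (y : EuclideanSpace ℝ (Fin n)) :
    volume ((fun x => (x, y)) ⁻¹' Θ) ≤ volume (restrictedSum Θ) := by
  calc volume ((fun x => (x, y)) ⁻¹' Θ)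
      = volume ((fun x => x + y) '' ((fun x => (x, y)) ⁻¹' Θ)) := by
        rw [image_add_right, measure_preimage_add_right]
    _ ≤ volume (restrictedSum Θ) := measure_mono <| by
        rintro _ ⟨x, hx, rfl⟩
        exact ⟨(x, y), hx, rfl⟩

theorem restrictedSum_small_ratio_bound_general (n : ℕ)
    (δ : ℝ) (hδ : δ ∈ Set.Icc (0 : ℝ) (1 / 2))
    (A B : Set (EuclideanSpace ℝ (Fin n)))
    (hAvol : volume A = 1) (hB0 : 0 < volume B) (hB1 : volume B < ⊤)
    (Θ : Set (EuclideanSpace ℝ (Fin n) × EuclideanSpace ℝ (Fin n)))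
    (hΘm : MeasurableSet Θ) (hΘ : Θ ⊆ A ×ˢ B)
    (hΘvol : ENNReal.ofReal (1 - δ) * (volume A * volume B) ≤ volume Θ) :
    ENNReal.ofReal (1 - 3 * δ / n) ≤ volume (restrictedSum Θ) ^ ((2 : ℝ) / n) := by
  obtain ⟨hδ₀, hδ⟩ := hδ
  rw [Measure.volume_eq_prod] at hΘvol
  obtain ⟨y, hy⟩ := exists_le_measure_slice_of_le_measure_prod hΘm hΘ (by simp [hAvol])
    hB0.ne' hB1.ne hΘvol
  rw [hAvol, mul_one] at hy
  calc ENNReal.ofReal (1 - 3 * δ / n) = ENNReal.ofReal (1 - 3 / 2 * (2 / n) * δ) := by ring_nf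
    _ ≤ ENNReal.ofReal ((1 - δ) ^ ((2 : ℝ) / n)) :=
      ENNReal.ofReal_le_ofReal (one_sub_mul_le_one_sub_rpow hδ₀ hδ (by positivity))
    _ = ENNReal.ofReal (1 - δ) ^ ((2 : ℝ) / n) := (ENNReal.ofReal_rpow_of_pos (by linarith)).symm
    _ ≤ volume (restrictedSum Θ) ^ ((2 : ℝ) / n) :=
      ENNReal.rpow_le_rpow (hy.trans (volume_slice_le_volume_restrictedSum Θ y)) (by positivity)

/-- If `λ(A) = 1`, `δ ∈ [0, 1/2]` and `λ(Θ) ≥ (1 - δ)·λ(A)·λ(B)`, then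
`λ(A +_Θ B)^{2/n} ≥ 1 - 3δ/n`. -/
theorem restrictedSum_small_ratio_bound (n : ℕ) (hn : 0 < n)
    (δ : ℝ) (hδ : δ ∈ Set.Icc (0 : ℝ) (1 / 2))
    (A B : Set (EuclideanSpace ℝ (Fin n)))
    (hA : MeasurableSet A) (hB : MeasurableSet B)
    (hAvol : volume A = 1) (hB0 : 0 < volume B) (hB1 : volume B < ⊤)
    (Θ : Set (EuclideanSpace ℝ (Fin n) × EuclideanSpace ℝ (Fin n)))
    (hΘm : MeasurableSet Θ) (hΘ : Θ ⊆ A ×ˢ B)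
    (hΘvol : ENNReal.ofReal (1 - δ) * (volume A * volume B) ≤ volume Θ) :
    ENNReal.ofReal (1 - 3 * δ / n) ≤ volume (restrictedSum Θ) ^ ((2 : ℝ) / n) :=
  restrictedSum_small_ratio_bound_general n δ hδ A B hAvol hB0 hB1 Θ hΘm hΘ hΘvol
end
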